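/- arXiv:1312.4980 — 2 statements merged into one kernel-verified Lean document; each statement's English description precedes it below -/
import Mathlib

section
/- Let u : ℝ → ℝ be a C² solution of -u'' + V'(u) = 0 on ℝ such that the discrepancy ξ(x) = (1/2)u'(x)² - V(u(x)) is identically zero, and suppose u(x₀) ∈ (σ_i, σ_{i+1}) for some x₀, where σ_i < σ_{i+1} are consecutive zeros of V with V > 0 on (σ_i, σ_{i+1}). Then there exists a ∈ ℝ such that u(x) = ζ⁺(x - a) for all x, or u(x) = ζ⁻(x - a) for all x, where ζ⁺ is the unique increasing solution of the first-order equation ζ' = √(2V(ζ)) with ζ(0) = z_i, ζ⁻(x) = ζ⁺(-x), and z_i ∈ (σ_i, σ_{i+1}) is a fixed point. -/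
open Set

lemma zeta_surj (V : ℝ → ℝ) (σi σi1 z : ℝ) (ζ : ℝ → ℝ)
    (hVcont : Continuous V)
    (hVpos : ∀ v ∈ Ioo σi σi1, 0 < V v)
    (hz : z ∈ Ioo σi σi1)
    (hζmem : ∀ x, ζ x ∈ Ioo σi σi1)
    (hζ0 : ζ 0 = z)
    (hζmono : StrictMono ζ)
    (hζode : ∀ x, HasDerivAt ζ (Real.sqrt (2 * V (ζ x))) x) :
    ∀ y ∈ Ioo σi σi1, ∃ x, ζ x = y := by
  intro y hy
  have hζcont : Continuous ζ := by
    apply continuous_iff_continuousAt.mpr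
    exact fun x => (hζode x).continuousAt
  rcases lt_trichotomy y z with hyz | hyz | hyz
  · -- y < z : go left
    suffices h : ∃ b, ζ b ≤ y by
      obtain ⟨b, hb⟩ := h
      have hb0 : b < 0 := by
        by_contra hb0
        push_neg at hb0
        have := hζmono.monotone hb0
        rw [hζ0] at this
        linarith
      have := intermediate_value_Icc hb0.le hζcont.continuousOn
        (a := b) (b := 0)
      rw [hζ0] at this
      obtain ⟨x, _, hx⟩ := this ⟨hb, hyz.le⟩
      exact ⟨x, hx⟩
    by_contra h
    push_neg at h
    -- so y < ζ x ≤ z for all x ≤ 0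
    have hmem : ∀ x ≤ (0:ℝ), ζ x ∈ Icc y z := by
      intro x hx
      exact ⟨(h x).le, by rw [← hζ0]; exact hζmono.monotone hx⟩
    have hsub : Icc y z ⊆ Ioo σi σi1 := fun v hv =>
      ⟨lt_of_lt_of_le hy.1 hv.1, lt_of_le_of_lt hv.2 hz.2⟩
    obtain ⟨v₀, hv₀K, hv₀min⟩ := isCompact_Icc.exists_isMinOn
      ⟨y, left_mem_Icc.mpr hyz.le⟩ hVcont.continuousOn
    have hm : 0 < V v₀ := hVpos _ (hsub hv₀K)
    set m := Real.sqrt (2 * V v₀) with hmdef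
    have hmpos : 0 < m := Real.sqrt_pos.mpr (by linarith)
    -- φ x = ζ x - m * x is monotone on Iic 0
    have hφ : ∀ x, HasDerivAt (fun x => ζ x - m * x) (Real.sqrt (2 * V (ζ x)) - m) x := by
      intro x
      exact (hζode x).sub ((hasDerivAt_id x).const_mul m |>.congr_deriv (by ring))
    have hmono : MonotoneOn (fun x => ζ x - m * x) (Iic (0:ℝ)) := by
      apply monotoneOn_of_deriv_nonneg (convex_Iic 0)
        (Continuous.continuousOn (by continuity))
      · intro x hx
        exact ((hφ x).differentiableAt).differentiableWithinAt
      · intro x hx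
        rw [(hφ x).deriv]
        have hxle : x ≤ (0:ℝ) := le_of_lt (by simpa [interior_Iic] using hx)
        have : V v₀ ≤ V (ζ x) := hv₀min (hmem x hxle)
        have := Real.sqrt_le_sqrt (by linarith : 2 * V v₀ ≤ 2 * V (ζ x))
        linarith
    -- for x ≤ 0 : ζ x ≤ z + m x
    set x₁ := -((z - y) / m + 1) with hx₁
    have hx₁neg : x₁ ≤ 0 := by
      have : 0 ≤ (z - y) / m := div_nonneg (by linarith) hmpos.le
      simp only [hx₁]; linarith
    have := hmono (mem_Iic.mpr hx₁neg) (mem_Iic.mpr le_rfl) hx₁neg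
    simp only [hζ0, mul_zero, sub_zero] at this
    have hbound : ζ x₁ ≤ z + m * x₁ := by linarith
    have : m * x₁ = -(z - y) - m := by
      rw [hx₁, mul_neg, mul_add, mul_div_assoc', mul_comm m (z - y), mul_div_assoc, div_self hmpos.ne']
      ring
    rw [this] at hbound
    have := h x₁
    linarith
  · exact ⟨0, by rw [hζ0, hyz]⟩
  · -- z < y : go right
    suffices h : ∃ b, y ≤ ζ b by
      obtain ⟨b, hb⟩ := h
      have hb0 : 0 < b := by
        by_contra hb0
        push_neg at hb0
        have := hζmono.monotone hb0
        rw [hζ0] at this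
        linarith
      have := intermediate_value_Icc hb0.le hζcont.continuousOn (a := 0) (b := b)
      rw [hζ0] at this
      obtain ⟨x, _, hx⟩ := this ⟨hyz.le, hb⟩
      exact ⟨x, hx⟩
    by_contra h
    push_neg at h
    have hmem : ∀ x, (0:ℝ) ≤ x → ζ x ∈ Icc z y := by
      intro x hx
      exact ⟨by rw [← hζ0]; exact hζmono.monotone hx, (h x).le⟩
    have hsub : Icc z y ⊆ Ioo σi σi1 := fun v hv =>
      ⟨lt_of_lt_of_le hz.1 hv.1, lt_of_le_of_lt hv.2 hy.2⟩
    obtain ⟨v₀, hv₀K, hv₀min⟩ := isCompact_Icc.exists_isMinOn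
      ⟨z, left_mem_Icc.mpr hyz.le⟩ hVcont.continuousOn
    have hm : 0 < V v₀ := hVpos _ (hsub hv₀K)
    set m := Real.sqrt (2 * V v₀) with hmdef
    have hmpos : 0 < m := Real.sqrt_pos.mpr (by linarith)
    have hφ : ∀ x, HasDerivAt (fun x => ζ x - m * x) (Real.sqrt (2 * V (ζ x)) - m) x := by
      intro x
      exact (hζode x).sub ((hasDerivAt_id x).const_mul m |>.congr_deriv (by ring))
    have hmono : MonotoneOn (fun x => ζ x - m * x) (Ici (0:ℝ)) := by
      apply monotoneOn_of_deriv_nonneg (convex_Ici 0)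
        (Continuous.continuousOn (by continuity))
      · intro x hx
        exact ((hφ x).differentiableAt).differentiableWithinAt
      · intro x hx
        rw [(hφ x).deriv]
        have hxle : (0:ℝ) ≤ x := le_of_lt (by simpa [interior_Ici] using hx)
        have : V v₀ ≤ V (ζ x) := hv₀min (hmem x hxle)
        have := Real.sqrt_le_sqrt (by linarith : 2 * V v₀ ≤ 2 * V (ζ x))
        linarith
    set x₁ := (y - z) / m + 1 with hx₁
    have hx₁pos : (0:ℝ) ≤ x₁ := by
      have : 0 ≤ (y - z) / m := div_nonneg (by linarith) hmpos.le
      simp only [hx₁]; linarith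
    have := hmono (mem_Ici.mpr le_rfl) (mem_Ici.mpr hx₁pos) hx₁pos
    simp only [hζ0, mul_zero, sub_zero] at this
    have hbound : z + m * x₁ ≤ ζ x₁ := by linarith
    have : m * x₁ = (y - z) + m := by
      rw [hx₁, mul_add, mul_div_assoc', mul_comm m (y - z), mul_div_assoc, div_self hmpos.ne']
      ring
    rw [this] at hbound
    have := h x₁
    linarith


lemma ode_rigidity (V : ℝ → ℝ) (σi σi1 : ℝ) (ζ u : ℝ → ℝ) (x₀ e c : ℝ)
    (hVsmooth : ContDiff ℝ (⊤ : ℕ∞) V)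
    (hVpos : ∀ v ∈ Ioo σi σi1, 0 < V v)
    (hζmem : ∀ x, ζ x ∈ Ioo σi σi1)
    (hζode : ∀ x, HasDerivAt ζ (Real.sqrt (2 * V (ζ x))) x)
    (hu1 : Differentiable ℝ u)
    (hu'cont : Continuous (deriv u))
    (hsq : ∀ x, (deriv u x) ^ 2 = 2 * V (u x))
    (he : e = 1 ∨ e = -1)
    (hinit : u x₀ = ζ (e * x₀ + c))
    (hd0 : deriv u x₀ = e * Real.sqrt (2 * V (u x₀))) :
    ∀ x, u x = ζ (e * x + c) := by
  have he2 : e * e = 1 := by rcases he with h | h <;> simp [h]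
  set w : ℝ → ℝ := fun x => ζ (e * x + c) with hw
  have hwmem : ∀ x, w x ∈ Ioo σi σi1 := fun x => hζmem _
  have hwderiv : ∀ x, HasDerivAt w (e * Real.sqrt (2 * V (w x))) x := by
    intro x
    have h1 : HasDerivAt (fun x : ℝ => e * x + c) e x := by
      simpa using ((hasDerivAt_id x).const_mul e).add_const c
    have := (hζode (e * x + c)).comp x h1
    simpa [hw, mul_comm, Function.comp_def] using this
  have hwcont : Continuous w := by
    apply continuous_iff_continuousAt.mpr
    exact fun x => (hwderiv x).continuousAt
  have hucont : Continuous u := hu1.continuous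
  have hVcont : Continuous V := hVsmooth.continuous
  -- the agreement set
  set P : Set ℝ := {x | u x = w x ∧ deriv u x = e * Real.sqrt (2 * V (u x))} with hP
  have hPclosed : IsClosed P := by
    apply IsClosed.inter
    · exact isClosed_eq hucont hwcont
    · exact isClosed_eq hu'cont
        (continuous_const.mul ((continuous_const.mul (hVcont.comp hucont)).sqrt))
  have hPopen : IsOpen P := by
    rw [isOpen_iff_mem_nhds]
    rintro x₁ ⟨heq1, heq2⟩
    have hy₁ : u x₁ ∈ Ioo σi σi1 := heq1 ▸ hwmem x₁
    have hVy₁ : 0 < V (u x₁) := hVpos _ hy₁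
    have hsqrtpos : 0 < Real.sqrt (2 * V (u x₁)) := Real.sqrt_pos.mpr (by linarith)
    -- Lipschitz bound for the vector field near u x₁
    have hfC1 : ContDiffAt ℝ 1 (fun y => e * Real.sqrt (2 * V y)) (u x₁) := by
      have h2V : ContDiffAt ℝ 1 (fun y => 2 * V y) (u x₁) :=
        (contDiff_const.mul (hVsmooth.of_le (by simp))).contDiffAt
      exact contDiffAt_const.mul (h2V.sqrt (ne_of_gt (by linarith)))
    obtain ⟨K, t, ht, hlip⟩ := hfC1.exists_lipschitzOnWith
    -- shrink to a ball where u, w take values in t and e * deriv u > 0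
    have hn1 : u ⁻¹' t ∈ nhds x₁ := hucont.continuousAt.preimage_mem_nhds ht
    have hn2 : w ⁻¹' t ∈ nhds x₁ := by
      apply hwcont.continuousAt.preimage_mem_nhds
      rwa [← heq1]
    have hn3 : {x | 0 < e * deriv u x} ∈ nhds x₁ := by
      apply ContinuousAt.preimage_mem_nhds (f := fun x => e * deriv u x)
        (continuous_const.mul hu'cont).continuousAt
      apply Ioi_mem_nhds
      show (0:ℝ) < e * deriv u x₁
      rw [heq2, ← mul_assoc, he2, one_mul]
      exact hsqrtpos
    obtain ⟨ε, hεpos, hball⟩ := Metric.mem_nhds_iff.mp (Filter.inter_mem (Filter.inter_mem hn1 hn2) hn3)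
    rw [Real.ball_eq_Ioo] at hball
    -- derivative identity on the ball
    have hud : ∀ x ∈ Ioo (x₁ - ε) (x₁ + ε), deriv u x = e * Real.sqrt (2 * V (u x)) := by
      intro x hx
      have hpos : 0 < e * deriv u x := (hball hx).2
      have h1 : e * deriv u x = Real.sqrt (2 * V (u x)) := by
        have h2 : (e * deriv u x) ^ 2 = 2 * V (u x) := by
          have : (e * deriv u x) ^ 2 = (e * e) * (deriv u x) ^ 2 := by ring
          rw [this, he2, one_mul, hsq]
        rw [← h2, Real.sqrt_sq hpos.le]
      calc deriv u x = e * (e * deriv u x) := by rw [← mul_assoc, he2, one_mul]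
        _ = e * Real.sqrt (2 * V (u x)) := by rw [h1]
    -- ODE uniqueness on the ball
    have heqon : EqOn u w (Ioo (x₁ - ε) (x₁ + ε)) := by
      refine ODE_solution_unique_of_mem_Ioo (v := fun _ y => e * Real.sqrt (2 * V y))
        (s := fun _ => t) (K := K) (a := x₁ - ε) (b := x₁ + ε) (t₀ := x₁) (fun _ _ => hlip)
        ⟨by linarith, by linarith⟩ ?_ ?_ heq1
      · intro x hx
        refine ⟨?_, (hball hx).1.1⟩
        have := (hu1 x).hasDerivAt
        rwa [hud x hx] at this
      · intro x hx
        exact ⟨hwderiv x, (hball hx).1.2⟩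
    -- conclude the ball is inside P
    apply Filter.mem_of_superset
      (Ioo_mem_nhds (a := x₁ - ε) (b := x₁ + ε) (by linarith) (by linarith))
    intro x hx
    refine ⟨heqon hx, hud x hx⟩
  -- clopen argument
  have hPuniv : P = univ := by
    apply IsClopen.eq_univ ⟨hPclosed, hPopen⟩
    exact ⟨x₀, hinit, hd0⟩
  intro x
  have : x ∈ P := hPuniv ▸ mem_univ x
  exact this.1

/-- A finite-energy stationary solution with vanishing discrepancy whose value enters the
open interval `(σᵢ, σᵢ₊₁)` between two consecutive wells is a translate of the increasing
heteroclinic front `ζ⁺` or of its reflection `ζ⁻ = ζ⁺(-·)`. -/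
theorem stmt1 (V : ℝ → ℝ) (σi σi1 z : ℝ) (ζ u : ℝ → ℝ) (x₀ : ℝ)
    (hVsmooth : ContDiff ℝ (⊤ : ℕ∞) V) (hVnonneg : ∀ v, 0 ≤ V v)
    (hlt : σi < σi1) (hVσi : V σi = 0) (hVσi1 : V σi1 = 0)
    (hVpos : ∀ v ∈ Ioo σi σi1, 0 < V v)
    (hz : z ∈ Ioo σi σi1)
    -- ζ is the unique increasing solution of ζ' = √(2V(ζ)), ζ(0) = z,
    -- with values in (σᵢ, σᵢ₊₁)
    (hζmem : ∀ x, ζ x ∈ Ioo σi σi1)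
    (hζ0 : ζ 0 = z)
    (hζmono : StrictMono ζ)
    (hζode : ∀ x, HasDerivAt ζ (Real.sqrt (2 * V (ζ x))) x)
    -- u is a C² solution of -u'' + V'(u) = 0
    (hu1 : Differentiable ℝ u)
    (hu2 : ∀ x, HasDerivAt (deriv u) (deriv V (u x)) x)
    -- the discrepancy ξ = (1/2) u'² - V(u) vanishes identically
    (hdisc : ∀ x, (1 / 2) * (deriv u x) ^ 2 - V (u x) = 0)
    (hx₀ : u x₀ ∈ Ioo σi σi1) :
    ∃ a : ℝ, (∀ x, u x = ζ (x - a)) ∨ (∀ x, u x = ζ (a - x)) := by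
  have hu'diff : Differentiable ℝ (deriv u) := fun x => (hu2 x).differentiableAt
  have hu'cont : Continuous (deriv u) := hu'diff.continuous
  have hsq : ∀ x, (deriv u x) ^ 2 = 2 * V (u x) := by
    intro x; have := hdisc x; linarith
  have hV0 : 0 < V (u x₀) := hVpos _ hx₀
  have hd : deriv u x₀ ≠ 0 := by
    intro h
    have := hsq x₀
    rw [h] at this
    simp at this
    linarith
  obtain ⟨xz, hxz⟩ := zeta_surj V σi σi1 z ζ hVsmooth.continuous hVpos hz hζmem hζ0
    hζmono hζode (u x₀) hx₀
  rcases hd.lt_or_gt with hneg | hpos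
  · -- decreasing solution: u x = ζ (a - x) with a = xz + x₀
    have hinit : u x₀ = ζ (-1 * x₀ + (xz + x₀)) := by
      rw [show -1 * x₀ + (xz + x₀) = xz by ring, hxz]
    have hd0 : deriv u x₀ = -1 * Real.sqrt (2 * V (u x₀)) := by
      have h2 : (-deriv u x₀) ^ 2 = 2 * V (u x₀) := by rw [neg_sq, hsq]
      rw [← h2, Real.sqrt_sq (by linarith : (0:ℝ) ≤ -deriv u x₀)]
      ring
    have hall := ode_rigidity V σi σi1 ζ u x₀ (-1) (xz + x₀) hVsmooth hVpos hζmem hζode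
      hu1 hu'cont hsq (Or.inr rfl) hinit hd0
    refine ⟨xz + x₀, Or.inr fun x => ?_⟩
    rw [hall x]
    congr 1
    ring
  · -- increasing solution: u x = ζ (x - a) with a = x₀ - xz
    have hinit : u x₀ = ζ (1 * x₀ + (xz - x₀)) := by
      rw [show 1 * x₀ + (xz - x₀) = xz by ring, hxz]
    have hd0 : deriv u x₀ = 1 * Real.sqrt (2 * V (u x₀)) := by
      rw [← hsq x₀, Real.sqrt_sq hpos.le, one_mul]
    have hall := ode_rigidity V σi σi1 ζ u x₀ 1 (xz - x₀) hVsmooth hVpos hζmem hζode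
      hu1 hu'cont hsq (Or.inl rfl) hinit hd0
    refine ⟨x₀ - xz, Or.inl fun x => ?_⟩
    rw [hall x]
    congr 1
    ring
end

section
/- Let θ > 1, r > 0, and let u : (-r, r) → ℝ be C² with -u'' + 2θ u^{2θ-1} ≤ 0 on (-r, r). Then for all x ∈ (-r, r), u(x) ≤ (√2(θ-1))^{-1/(θ-1)} [ (x + r)^{-1/(θ-1)} + (r - x)^{-1/(θ-1)} ]. -/
/-!
`U(s) = (√2 (θ - 1) s)^(-1/(θ-1))` solves `U'' = 2θ U^(2θ-1)` on `(0, ∞)` and blows up at `0`.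
Since `t ↦ t^(2θ-1)` is superadditive on `[0, ∞)`, `V(x) = U(x + ρ) + U(ρ - x)` is a supersolution
on `(-ρ, ρ)` blowing up at both ends. If `u > V` somewhere, `u - V` has an interior maximum where
`u > V`, so `u'' ≥ 2θ u^(2θ-1) > 2θ V^(2θ-1) ≥ V''`, contradicting the maximum. Hence `u ≤ V` on
`(-ρ, ρ)` for every `ρ < r`, and the bound follows by letting `ρ → r`.
-/

open Set Filter Topology

theorem IsLocalMax.hasDerivAt_deriv_nonpos {f f' : ℝ → ℝ} {a f'' : ℝ} (h : IsLocalMax f a)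
    (hf : ∀ᶠ x in 𝓝 a, HasDerivAt f (f' x) x) (hf' : HasDerivAt f' f'' a) : f'' ≤ 0 := by
  have hderiv : deriv f =ᶠ[𝓝 a] f' := hf.mono fun x hx => hx.deriv
  have hderiv2 : deriv (deriv f) a = f'' := (hf'.congr_of_eventuallyEq hderiv).deriv
  by_contra! hpos
  have hmin : IsLocalMin f a :=
    isLocalMin_of_deriv_deriv_pos (hderiv2 ▸ hpos) h.deriv_eq_zero hf.self_of_nhds.continuousAt
  have hconst : f =ᶠ[𝓝 a] fun _ => f a :=
    (hmin.and h).mono fun x hx => le_antisymm hx.2 hx.1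
  have hzero : deriv (deriv f) a = 0 := by
    rw [hconst.deriv.deriv_eq]
    simp
  linarith

theorem exists_isMaxOn_Ioo_of_tendsto_atBot {f : ℝ → ℝ} {a b x₀ : ℝ} (hx₀ : x₀ ∈ Ioo a b)
    (hf : ContinuousOn f (Ioo a b)) (ha : Tendsto f (𝓝[>] a) atBot)
    (hb : Tendsto f (𝓝[<] b) atBot) : ∃ c ∈ Ioo a b, IsMaxOn f (Ioo a b) c := by
  obtain ⟨a', ha', hleft⟩ := (mem_nhdsGT_iff_exists_mem_Ioc_Ioo_subset hx₀.1).1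
    (ha.eventually (eventually_lt_atBot (f x₀)))
  obtain ⟨b', hb', hright⟩ := (mem_nhdsLT_iff_exists_mem_Ico_Ioo_subset hx₀.2).1
    (hb.eventually (eventually_lt_atBot (f x₀)))
  have hsub : Icc a' b' ⊆ Ioo a b := Icc_subset_Ioo ha'.1 hb'.2
  obtain ⟨c, hc, hmax⟩ := isCompact_Icc.exists_isMaxOn ⟨x₀, ha'.2, hb'.1⟩ (hf.mono hsub)
  refine ⟨c, hsub hc, fun y hy => ?_⟩
  by_cases hy' : y ∈ Icc a' b'
  · exact hmax hy'
  · have hlt : f y < f x₀ := by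
      rcases not_and_or.1 hy' with h | h
      · exact hleft ⟨hy.1, not_le.1 h⟩
      · exact hright ⟨not_le.1 h, hy.2⟩
    exact (hlt.trans_le (hmax ⟨ha'.2, hb'.1⟩)).le

theorem le_of_deriv2_lt_of_tendsto_atTop {u u' u'' v v' v'' : ℝ → ℝ} {a b : ℝ}
    (hu : ∀ x ∈ Ioo a b, HasDerivAt u (u' x) x) (hu' : ∀ x ∈ Ioo a b, HasDerivAt u' (u'' x) x)
    (hv : ∀ x ∈ Ioo a b, HasDerivAt v (v' x) x) (hv' : ∀ x ∈ Ioo a b, HasDerivAt v' (v'' x) x)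
    (hbdd : BddAbove (u '' Ioo a b)) (hva : Tendsto v (𝓝[>] a) atTop)
    (hvb : Tendsto v (𝓝[<] b) atTop) (h : ∀ x ∈ Ioo a b, v x < u x → v'' x < u'' x) :
    ∀ x ∈ Ioo a b, u x ≤ v x := by
  intro x₀ hx₀
  by_contra! hlt
  obtain ⟨M, hM⟩ := hbdd
  have hw : ∀ l, Ioo a b ∈ l → Tendsto v l atTop → Tendsto (fun x => u x - v x) l atBot :=
    fun l hl hvl => tendsto_atBot_add_left_of_ge' l M
      (mem_of_superset hl fun x hx => hM (mem_image_of_mem u hx)) (tendsto_neg_atTop_atBot.comp hvl)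
  obtain ⟨c, hc, hmax⟩ := exists_isMaxOn_Ioo_of_tendsto_atBot hx₀
    (fun x hx => ((hu x hx).sub (hv x hx)).continuousAt.continuousWithinAt)
    (hw _ (Ioo_mem_nhdsGT (hx₀.1.trans hx₀.2)) hva) (hw _ (Ioo_mem_nhdsLT (hx₀.1.trans hx₀.2)) hvb)
  have hnhds : Ioo a b ∈ 𝓝 c := Ioo_mem_nhds hc.1 hc.2
  have hw'' := (hmax.isLocalMax hnhds).hasDerivAt_deriv_nonpos
    (mem_of_superset hnhds fun x hx => (hu x hx).sub (hv x hx)) ((hu' c hc).sub (hv' c hc))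
  have hvc : v c < u c := sub_pos.1 ((sub_pos.2 hlt).trans_le (hmax hx₀))
  linarith [h c hc hvc]

theorem hasDerivAt_mul_rpow {k p s : ℝ} (h : k * s ≠ 0) :
    HasDerivAt (fun y => (k * y) ^ p) (p * k * (k * s) ^ (p - 1)) s := by
  simpa [mul_comm, mul_left_comm] using
    ((hasDerivAt_id s).const_mul k).rpow_const (p := p) (Or.inl h)

noncomputable def singularSolution (θ s : ℝ) : ℝ := (√2 * (θ - 1) * s) ^ (-(1 / (θ - 1)))

section SingularSolution

variable {θ : ℝ}

theorem singularSolution_nonneg (hθ : 1 < θ) {s : ℝ} (hs : 0 ≤ s) : 0 ≤ singularSolution θ s := by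
  have : 0 < θ - 1 := sub_pos.2 hθ
  unfold singularSolution
  positivity

theorem hasDerivAt_singularSolution (hθ : 1 < θ) {s : ℝ} (hs : 0 < s) :
    HasDerivAt (singularSolution θ)
      (-(1 / (θ - 1)) * (√2 * (θ - 1)) * (√2 * (θ - 1) * s) ^ (-(1 / (θ - 1)) - 1)) s := by
  have : 0 < θ - 1 := sub_pos.2 hθ
  exact hasDerivAt_mul_rpow (by positivity)

theorem hasDerivAt_deriv_singularSolution (hθ : 1 < θ) {s : ℝ} (hs : 0 < s) :
    HasDerivAt (deriv (singularSolution θ)) (2 * θ * singularSolution θ s ^ (2 * θ - 1)) s := by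
  have hθ1 : 0 < θ - 1 := sub_pos.2 hθ
  have hderiv := (eventually_gt_nhds hs).mono fun y hy => (hasDerivAt_singularSolution hθ hy).deriv
  refine (((hasDerivAt_mul_rpow (by positivity)).const_mul _).congr_of_eventuallyEq
    hderiv).congr_deriv ?_
  set α := 1 / (θ - 1) with hα
  set k := √2 * (θ - 1) with hk
  have hαθ : α * (θ - 1) = 1 := by rw [hα]; field_simp
  have hk2 : k ^ 2 = 2 * (θ - 1) ^ 2 := by rw [hk, mul_pow, Real.sq_sqrt zero_le_two]
  -- U'' = α (α + 1) k² (k s)^(-α-2), and α (α + 1) k² = 2θ, α (2θ - 1) = α + 2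
  rw [singularSolution, ← Real.rpow_mul (by positivity),
    show -α * (2 * θ - 1) = -α - 1 - 1 by linear_combination (-2) * hαθ]
  have hcoef : α * (α + 1) * k ^ 2 = 2 * θ := by
    rw [hk2]; linear_combination (2 * α * (θ - 1) + 2 * θ) * hαθ
  linear_combination (k * s) ^ (-α - 1 - 1) * hcoef

theorem tendsto_singularSolution_nhdsGT_zero (hθ : 1 < θ) :
    Tendsto (singularSolution θ) (𝓝[>] 0) atTop := by
  have hθ1 : 0 < θ - 1 := sub_pos.2 hθ
  have hk : 0 < √2 * (θ - 1) := by positivity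
  refine (tendsto_rpow_neg_nhdsGT_zero (neg_neg_of_pos (by positivity))).comp
    (tendsto_nhdsWithin_iff.2 ⟨?_, eventually_nhdsWithin_of_forall fun s hs => mul_pos hk hs⟩)
  exact ((continuous_const_mul _).tendsto' 0 0 (mul_zero _)).mono_left nhdsWithin_le_nhds

end SingularSolution

noncomputable def singularBarrier (θ ρ x : ℝ) : ℝ :=
  singularSolution θ (x + ρ) + singularSolution θ (ρ - x)

section SingularBarrier

variable {θ ρ x : ℝ}

theorem hasDerivAt_singularBarrier (hθ : 1 < θ) (hx : x ∈ Ioo (-ρ) ρ) :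
    HasDerivAt (singularBarrier θ ρ)
      (deriv (singularSolution θ) (x + ρ) - deriv (singularSolution θ) (ρ - x)) x := by
  have hplus := (hasDerivAt_singularSolution hθ (neg_lt_iff_pos_add.1 hx.1)).differentiableAt
  have hminus := (hasDerivAt_singularSolution hθ (sub_pos.2 hx.2)).differentiableAt
  exact (hplus.hasDerivAt.comp_add_const x ρ).add (hminus.hasDerivAt.comp_const_sub ρ x)

theorem hasDerivAt_deriv_singularBarrier (hθ : 1 < θ) (hx : x ∈ Ioo (-ρ) ρ) :
    HasDerivAt (fun y => deriv (singularSolution θ) (y + ρ) - deriv (singularSolution θ) (ρ - y))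
      (2 * θ * singularSolution θ (x + ρ) ^ (2 * θ - 1)
        + 2 * θ * singularSolution θ (ρ - x) ^ (2 * θ - 1)) x := by
  have hplus := hasDerivAt_deriv_singularSolution hθ (neg_lt_iff_pos_add.1 hx.1)
  have hminus := hasDerivAt_deriv_singularSolution hθ (sub_pos.2 hx.2)
  exact ((hplus.comp_add_const x ρ).sub (hminus.comp_const_sub ρ x)).congr_deriv
    (sub_neg_eq_add _ _)

theorem singularBarrier_supersolution (hθ : 1 < θ) (hx : x ∈ Ioo (-ρ) ρ) :
    2 * θ * singularSolution θ (x + ρ) ^ (2 * θ - 1)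
        + 2 * θ * singularSolution θ (ρ - x) ^ (2 * θ - 1)
      ≤ 2 * θ * singularBarrier θ ρ x ^ (2 * θ - 1) := by
  rw [← mul_add]
  exact mul_le_mul_of_nonneg_left (Real.add_rpow_le_rpow_add
    (singularSolution_nonneg hθ (neg_le_iff_add_nonneg.1 hx.1.le))
    (singularSolution_nonneg hθ (sub_nonneg.2 hx.2.le)) (by linarith)) (by linarith)

theorem tendsto_singularBarrier_nhdsGT (hθ : 1 < θ) (hρ : 0 < ρ) :
    Tendsto (singularBarrier θ ρ) (𝓝[>] (-ρ)) atTop := by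
  have hplus : Tendsto (fun x => x + ρ) (𝓝[>] (-ρ)) (𝓝[>] 0) := tendsto_nhdsWithin_iff.2
    ⟨by simpa using ((continuous_add_const ρ).tendsto (-ρ)).mono_left nhdsWithin_le_nhds,
      eventually_nhdsWithin_of_forall fun x hx => mem_Ioi.2 (neg_lt_iff_pos_add.1 hx)⟩
  have hminus : Tendsto (fun x => singularSolution θ (ρ - x)) (𝓝[>] (-ρ))
      (𝓝 (singularSolution θ (ρ - -ρ))) :=
    ((hasDerivAt_singularSolution hθ (by linarith)).continuousAt.comp
      (continuous_sub_left ρ).continuousAt).tendsto.mono_left nhdsWithin_le_nhds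
  exact ((tendsto_singularSolution_nhdsGT_zero hθ).comp hplus).atTop_add hminus

theorem tendsto_singularBarrier_nhdsLT (hθ : 1 < θ) (hρ : 0 < ρ) :
    Tendsto (singularBarrier θ ρ) (𝓝[<] ρ) atTop := by
  have hminus : Tendsto (fun x => ρ - x) (𝓝[<] ρ) (𝓝[>] 0) := tendsto_nhdsWithin_iff.2
    ⟨by simpa using ((continuous_sub_left ρ).tendsto ρ).mono_left nhdsWithin_le_nhds,
      eventually_nhdsWithin_of_forall fun x hx => mem_Ioi.2 (sub_pos.2 hx)⟩
  have hplus : Tendsto (fun x => singularSolution θ (x + ρ)) (𝓝[<] ρ)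
      (𝓝 (singularSolution θ (ρ + ρ))) :=
    ((hasDerivAt_singularSolution hθ (by linarith)).continuousAt.comp
      (continuous_add_const ρ).continuousAt).tendsto.mono_left nhdsWithin_le_nhds
  exact hplus.add_atTop ((tendsto_singularSolution_nhdsGT_zero hθ).comp hminus)

end SingularBarrier

theorem le_singularBarrier {θ ρ : ℝ} {u : ℝ → ℝ} (hθ : 1 < θ) (hρ : 0 < ρ)
    (hcont : ContinuousOn u (Icc (-ρ) ρ))
    (hu1 : ∀ x ∈ Ioo (-ρ) ρ, DifferentiableAt ℝ u x)
    (hu2 : ∀ x ∈ Ioo (-ρ) ρ, DifferentiableAt ℝ (deriv u) x)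
    (hsub : ∀ x ∈ Ioo (-ρ) ρ, -(deriv (deriv u) x) + 2 * θ * u x ^ (2 * θ - 1) ≤ 0) :
    ∀ x ∈ Ioo (-ρ) ρ, u x ≤ singularBarrier θ ρ x := by
  refine le_of_deriv2_lt_of_tendsto_atTop (fun x hx => (hu1 x hx).hasDerivAt)
    (fun x hx => (hu2 x hx).hasDerivAt) (fun x hx => hasDerivAt_singularBarrier hθ hx)
    (fun x hx => hasDerivAt_deriv_singularBarrier hθ hx)
    ((isCompact_Icc.bddAbove_image hcont).mono (image_mono Ioo_subset_Icc_self))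
    (tendsto_singularBarrier_nhdsGT hθ hρ) (tendsto_singularBarrier_nhdsLT hθ hρ) ?_
  intro x hx hlt
  have hV : 0 ≤ singularBarrier θ ρ x := add_nonneg
    (singularSolution_nonneg hθ (neg_le_iff_add_nonneg.1 hx.1.le))
    (singularSolution_nonneg hθ (sub_nonneg.2 hx.2.le))
  calc _ ≤ 2 * θ * singularBarrier θ ρ x ^ (2 * θ - 1) := singularBarrier_supersolution hθ hx
    _ < 2 * θ * u x ^ (2 * θ - 1) := by gcongr; linarith
    _ ≤ deriv (deriv u) x := by linarith [hsub x hx]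

theorem stmt10_general (θ r : ℝ) (hθ : 1 < θ) (u : ℝ → ℝ)
    (hu1 : ∀ x ∈ Ioo (-r) r, DifferentiableAt ℝ u x)
    (hu2 : ∀ x ∈ Ioo (-r) r, DifferentiableAt ℝ (deriv u) x)
    (hsub : ∀ x ∈ Ioo (-r) r,
      -(deriv (deriv u) x) + 2 * θ * u x ^ (2 * θ - 1) ≤ 0) :
    ∀ x ∈ Ioo (-r) r,
      u x ≤ (Real.sqrt 2 * (θ - 1)) ^ (-(1 / (θ - 1))) *
        ((x + r) ^ (-(1 / (θ - 1))) + (r - x) ^ (-(1 / (θ - 1)))) := by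
  intro x hx
  have hx' : |x| < r := abs_lt.2 hx
  have hle : ∀ᶠ ρ in 𝓝[<] r, u x ≤ singularBarrier θ ρ x := by
    filter_upwards [Ioo_mem_nhdsLT hx'] with ρ hρ
    have hsub' : Icc (-ρ) ρ ⊆ Ioo (-r) r := Icc_subset_Ioo (neg_lt_neg hρ.2) hρ.2
    exact le_singularBarrier hθ ((abs_nonneg x).trans_lt hρ.1)
      (fun y hy => (hu1 y (hsub' hy)).continuousAt.continuousWithinAt)
      (fun y hy => hu1 y (hsub' (Ioo_subset_Icc_self hy)))
      (fun y hy => hu2 y (hsub' (Ioo_subset_Icc_self hy)))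
      (fun y hy => hsub y (hsub' (Ioo_subset_Icc_self hy))) x (abs_lt.1 hρ.1)
  have hplus : 0 < x + r := neg_lt_iff_pos_add.1 hx.1
  have hminus : 0 < r - x := sub_pos.2 hx.2
  have hcont : ContinuousAt (fun ρ => singularBarrier θ ρ x) r :=
    ((hasDerivAt_singularSolution hθ hplus).continuousAt.comp (f := (x + ·)) (by fun_prop)).add
      ((hasDerivAt_singularSolution hθ hminus).continuousAt.comp (f := (· - x)) (by fun_prop))
  calc u x ≤ singularBarrier θ r x := ge_of_tendsto (hcont.tendsto.mono_left nhdsWithin_le_nhds) hle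
    _ = _ := by
      have : 0 < θ - 1 := sub_pos.2 hθ
      rw [singularBarrier, singularSolution, singularSolution, Real.mul_rpow (by positivity)
        hplus.le, Real.mul_rpow (by positivity) hminus.le, mul_add]

/-- Keller–Osserman universal upper bound (Lemma A.2(i)): any C² subsolution of
`-u'' + 2θ u^(2θ-1) ≤ 0` on `(-r, r)` satisfies
`u(x) ≤ (√2 (θ-1))^{-1/(θ-1)} [(x+r)^{-1/(θ-1)} + (r-x)^{-1/(θ-1)}]`. -/
theorem stmt10 (θ r : ℝ) (hθ : 1 < θ) (hr : 0 < r) (u : ℝ → ℝ)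
    (hu1 : ∀ x ∈ Ioo (-r) r, DifferentiableAt ℝ u x)
    (hu2 : ∀ x ∈ Ioo (-r) r, DifferentiableAt ℝ (deriv u) x)
    (hsub : ∀ x ∈ Ioo (-r) r,
      -(deriv (deriv u) x) + 2 * θ * u x ^ (2 * θ - 1) ≤ 0) :
    ∀ x ∈ Ioo (-r) r,
      u x ≤ (Real.sqrt 2 * (θ - 1)) ^ (-(1 / (θ - 1))) *
        ((x + r) ^ (-(1 / (θ - 1))) + (r - x) ^ (-(1 / (θ - 1)))) :=
  stmt10_general θ r hθ u hu1 hu2 hsub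
end
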